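/- Under the hypotheses of the main theorem, the ultrafilter generated by ℬ equals the E-limit ultrafilter: X ⊆ λ contains some B_{α,β,Y} ∈ ℬ if and only if {i < κ : X ∩ [λ_{<i}, λ_i) ∈ U_i} ∈ E (identifying U_i with an ultrafilter on the interval [λ_{<i}, λ_i) via a bijection, or assuming each U_i concentrates on [λ_{<i}, λ_i)). -/

import Mathlib

/-!
If `B_{α,β,Y} ⊆ X`, then for `i ∈ Y` the set `X ∩ [λ_{<i}, λ_i)` contains `A_{i,g_β(i)}` minus the
initial segment `[0, f_α(i)]`; that segment has size `< λ_i`, so uniformity of `U_i` puts the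
difference in `U_i`.

Conversely, if `X ∩ [λ_{<i}, λ_i) ∈ U_i` for `E`-almost all `i`, choose `h(i) < θ_i` with
`A_{i,h(i)} ⊆* X`. A `g_β` dominating `h` modulo `E` still gives `A_{i,g_β(i)} ⊆* X`, because the
`A_{i,·}` are `⊆*`-decreasing. By regularity of `λ_i` the exceptional set `A_{i,g_β(i)} \ X`, of size
`< λ_i`, is bounded below `λ_i`, and an `f_α` dominating these bounds modulo `E` cuts it off, so that
`B_{α,β,Y} ⊆ X` for a suitable `Y ∈ E`.
-/

open Cardinal Set

def IsUltrafilterOn (S : Set Ordinal.{0}) (U : Set (Set Ordinal.{0})) : Prop :=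
  (∀ A ∈ U, A ⊆ S) ∧ S ∈ U ∧ ∅ ∉ U ∧
    (∀ A ∈ U, ∀ B ∈ U, A ∩ B ∈ U) ∧
    (∀ A ∈ U, ∀ B, A ⊆ B → B ⊆ S → B ∈ U) ∧
    (∀ A, A ⊆ S → A ∈ U ∨ S \ A ∈ U)

def cardLT (s : Set Ordinal.{0}) (μ : Cardinal.{0}) : Prop := #s < Cardinal.lift.{1,0} μ

def cardEQ (s : Set Ordinal.{0}) (μ : Cardinal.{0}) : Prop := #s = Cardinal.lift.{1,0} μ

/-- `λ_{<i} = sup{λ_j : j < i}` (as an ordinal). -/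
noncomputable def lamlt (lam_ : Ordinal.{0} → Cardinal.{0}) (i : Ordinal.{0}) : Ordinal.{0} :=
  sSup ((fun j => (lam_ j).ord) '' Set.Iio i)

/-- `B_{α,β,Y} = {ζ < λ : ∃ i ∈ Y (λ_{<i} ≤ ζ < λ_i ∧ ζ ∈ A_{i,g_β(i)} ∧ ζ > f_α(i))}`. -/
def Bset (lam_ : Ordinal.{0} → Cardinal.{0}) (A : Ordinal.{0} → Ordinal.{0} → Set Ordinal.{0})
    (f g : Ordinal.{0} → Ordinal.{0} → Ordinal.{0}) (α β : Ordinal.{0})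
    (Y : Set Ordinal.{0}) : Set Ordinal.{0} :=
  {ζ | ∃ i ∈ Y, lamlt lam_ i ≤ ζ ∧ ζ < (lam_ i).ord ∧ ζ ∈ A i (g β i) ∧ f α i < ζ}

theorem cardLT.mono {s t : Set Ordinal.{0}} {μ : Cardinal.{0}} (hst : s ⊆ t) (ht : cardLT t μ) :
    cardLT s μ :=
  (mk_le_mk_of_subset hst).trans_lt ht

theorem cardLT.union {s t : Set Ordinal.{0}} {μ : Cardinal.{0}} (hμ : ℵ₀ ≤ μ)
    (hs : cardLT s μ) (ht : cardLT t μ) : cardLT (s ∪ t) μ :=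
  (mk_union_le s t).trans_lt (add_lt_of_lt (aleph0_le_lift.2 hμ) hs ht)

theorem cardLT.diff_trans {s t u : Set Ordinal.{0}} {μ : Cardinal.{0}} (hμ : ℵ₀ ≤ μ)
    (hst : cardLT (s \ t) μ) (htu : cardLT (t \ u) μ) : cardLT (s \ u) μ :=
  (hst.union hμ htu).mono (sdiff_triangle s t u)

theorem cardLT_Iic {μ : Cardinal.{0}} (hμ : ℵ₀ ≤ μ) {o : Ordinal.{0}} (ho : o < μ.ord) :
    cardLT (Iic o) μ := by
  rw [cardLT, ← Order.Iio_succ, mk_Iio_ordinal, lift_lt, ← lt_ord]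
  exact (isSuccLimit_ord hμ).succ_lt ho

theorem sSup_lt_ord_of_cardLT {c : Cardinal.{0}} (hc : c.IsRegular) {s : Set Ordinal.{0}}
    (hs : s ⊆ Iio c.ord) (hcard : cardLT s c) : sSup s < c.ord := by
  refine Ordinal.sSup_lt_of_lt_cof ?_ hs
  rwa [lift_ord, hc.lift.cof_ord]

namespace IsUltrafilterOn

variable {S : Set Ordinal.{0}} {U : Set (Set Ordinal.{0})} {A B : Set Ordinal.{0}}

theorem subset (hU : IsUltrafilterOn S U) (hA : A ∈ U) : A ⊆ S :=
  hU.1 A hA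

theorem self_mem (hU : IsUltrafilterOn S U) : S ∈ U :=
  hU.2.1

theorem inter_mem (hU : IsUltrafilterOn S U) (hA : A ∈ U) (hB : B ∈ U) : A ∩ B ∈ U :=
  hU.2.2.2.1 A hA B hB

theorem mem_of_superset (hU : IsUltrafilterOn S U) (hA : A ∈ U) (hAB : A ⊆ B) (hBS : B ⊆ S) :
    B ∈ U :=
  hU.2.2.2.2.1 A hA B hAB hBS

theorem diff_mem_of_cardLT {μ : Cardinal.{0}} (hU : IsUltrafilterOn S U)
    (huni : ∀ X ∈ U, cardEQ X μ) (hA : A ∈ U) (hB : cardLT B μ) : A \ B ∈ U := by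
  have hSB : S ∩ B ∉ U := fun h => ne_of_lt (hB.mono inter_subset_right) (huni _ h)
  have hcompl : S \ (S ∩ B) ∈ U := (hU.2.2.2.2.2 _ inter_subset_left).resolve_left hSB
  refine hU.mem_of_superset (hU.inter_mem hA hcompl) ?_ (sdiff_subset.trans (hU.subset hA))
  rintro x ⟨hxA, -, hxB⟩
  exact ⟨hxA, fun hx => hxB ⟨hU.subset hA hxA, hx⟩⟩

end IsUltrafilterOn

theorem exists_scale_dominating_witnesses {κ χ : Ordinal.{0}} {E : Set (Set Ordinal.{0})}
    (hE : IsUltrafilterOn (Iio κ) E) {bound : Ordinal.{0} → Ordinal.{0}}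
    {f : Ordinal.{0} → Ordinal.{0} → Ordinal.{0}}
    (hfcof : ∀ h : Ordinal.{0} → Ordinal.{0}, (∀ i < κ, h i < bound i) →
      ∃ α < χ, {i | i < κ ∧ h i < f α i} ∈ E)
    (hpos : ∀ i < κ, 0 < bound i) {P : Ordinal.{0} → Ordinal.{0} → Prop}
    {S : Set Ordinal.{0}} (hS : S ∈ E) (hP : ∀ i ∈ S, ∃ γ < bound i, P i γ) :
    ∃ α < χ, {i ∈ S | ∃ γ, P i γ ∧ γ < f α i} ∈ E := by
  have hwitness : ∀ i, ∃ γ, (i < κ → γ < bound i) ∧ (i ∈ S → P i γ) := by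
    intro i
    by_cases hi : i ∈ S
    · obtain ⟨γ, hγ, hPγ⟩ := hP i hi
      exact ⟨γ, fun _ => hγ, fun _ => hPγ⟩
    · exact ⟨0, hpos i, fun h => absurd h hi⟩
  choose h hh_lt hh_P using hwitness
  obtain ⟨α, hα, hdom⟩ := hfcof h hh_lt
  refine ⟨α, hα, hE.mem_of_superset (hE.inter_mem hS hdom) ?_
    ((sep_subset _ _).trans (hE.subset hS))⟩
  rintro i ⟨hiS, -, hlt⟩
  exact ⟨hiS, h i, hh_P i hiS, hlt⟩

section Bset

variable {κ χ : Cardinal.{0}} {E : Set (Set Ordinal.{0})} {lam_ θ : Ordinal.{0} → Cardinal.{0}}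
  {U : Ordinal.{0} → Set (Set Ordinal.{0})} {A : Ordinal.{0} → Ordinal.{0} → Set Ordinal.{0}}
  {f g : Ordinal.{0} → Ordinal.{0} → Ordinal.{0}} {α β i : Ordinal.{0}} {X Y : Set Ordinal.{0}}

theorem diff_Iic_subset_Bset (hi : i ∈ Y)
    (hA : A i (g β i) ⊆ Ico (lamlt lam_ i) (lam_ i).ord) :
    A i (g β i) \ Iic (f α i) ⊆ Bset lam_ A f g α β Y := by
  rintro ζ ⟨hζA, hζf⟩
  exact ⟨i, hi, (hA hζA).1, (hA hζA).2, hζA, not_le.1 hζf⟩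

theorem Bset_subset_of_forall_diff_subset_Iic
    (hY : ∀ i ∈ Y, ∃ γ, A i (g β i) \ X ⊆ Iic γ ∧ γ < f α i) :
    Bset lam_ A f g α β Y ⊆ X := by
  rintro ζ ⟨i, hiY, -, -, hζA, hfζ⟩
  by_contra hζX
  obtain ⟨γ, hγX, hγf⟩ := hY i hiY
  exact (hγX ⟨hζA, hζX⟩).not_gt (hγf.trans hfζ)

theorem inter_Ico_mem_of_Bset_subset
    (hUi : IsUltrafilterOn (Ico (lamlt lam_ i) (lam_ i).ord) (U i))
    (hUuni : ∀ X ∈ U i, cardEQ X (lam_ i)) (hℵ₀ : ℵ₀ ≤ lam_ i) (hA : A i (g β i) ∈ U i)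
    (hf : f α i < (lam_ i).ord) (hi : i ∈ Y) (hB : Bset lam_ A f g α β Y ⊆ X) :
    X ∩ Ico (lamlt lam_ i) (lam_ i).ord ∈ U i :=
  hUi.mem_of_superset (hUi.diff_mem_of_cardLT hUuni hA (cardLT_Iic hℵ₀ hf))
    (subset_inter ((diff_Iic_subset_Bset hi (hUi.subset hA)).trans hB)
      (sdiff_subset.trans (hUi.subset hA)))
    inter_subset_right

theorem exists_scale_almost_subset (hE : IsUltrafilterOn (Iio κ.ord) E)
    (hreg : ∀ i < κ.ord, (lam_ i).IsRegular)
    (hU : ∀ i < κ.ord, IsUltrafilterOn (Ico (lamlt lam_ i) (lam_ i).ord) (U i))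
    (hAdec : ∀ i < κ.ord, ∀ α α', α < α' → α' < (θ i).ord →
      cardLT (A i α' \ A i α) (lam_ i))
    (hAgen : ∀ i < κ.ord, ∀ B ∈ U i, ∃ α < (θ i).ord, cardLT (A i α \ B) (lam_ i))
    (hg : ∀ β < χ.ord, ∀ i < κ.ord, g β i < (θ i).ord)
    (hgcof : ∀ h : Ordinal.{0} → Ordinal.{0}, (∀ i < κ.ord, h i < (θ i).ord) →
      ∃ β < χ.ord, {i | i < κ.ord ∧ h i < g β i} ∈ E)
    (hX : {i | i < κ.ord ∧ X ∩ Ico (lamlt lam_ i) (lam_ i).ord ∈ U i} ∈ E) :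
    ∃ β < χ.ord, {i | i < κ.ord ∧ cardLT (A i (g β i) \ X) (lam_ i)} ∈ E := by
  have hpos : ∀ i < κ.ord, 0 < (θ i).ord := fun i hi =>
    let ⟨_, hγ, _⟩ := hAgen i hi _ (hU i hi).self_mem
    zero_le.trans_lt hγ
  obtain ⟨β, hβ, hT⟩ := exists_scale_dominating_witnesses hE hgcof hpos hX
    (P := fun i γ => cardLT (A i γ \ X) (lam_ i)) fun i ⟨hi, hXi⟩ =>
      let ⟨γ, hγ, hγX⟩ := hAgen i hi _ hXi
      ⟨γ, hγ, hγX.mono (sdiff_subset_sdiff_right inter_subset_left)⟩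
  refine ⟨β, hβ, hE.mem_of_superset hT ?_ fun i hi => hi.1⟩
  rintro i ⟨⟨hi, -⟩, γ, hγX, hγg⟩
  exact ⟨hi, (hAdec i hi γ _ hγg (hg β hβ i hi)).diff_trans (hreg i hi).aleph0_le hγX⟩

theorem exists_Bset_subset_of_almost_subset (hE : IsUltrafilterOn (Iio κ.ord) E)
    (hreg : ∀ i < κ.ord, (lam_ i).IsRegular)
    (hU : ∀ i < κ.ord, IsUltrafilterOn (Ico (lamlt lam_ i) (lam_ i).ord) (U i))
    (hAmem : ∀ i < κ.ord, ∀ α < (θ i).ord, A i α ∈ U i)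
    (hfcof : ∀ h : Ordinal.{0} → Ordinal.{0}, (∀ i < κ.ord, h i < (lam_ i).ord) →
      ∃ α < χ.ord, {i | i < κ.ord ∧ h i < f α i} ∈ E)
    (hgβ : ∀ i < κ.ord, g β i < (θ i).ord)
    (hT : {i | i < κ.ord ∧ cardLT (A i (g β i) \ X) (lam_ i)} ∈ E) :
    ∃ α < χ.ord, ∃ Y ∈ E, Bset lam_ A f g α β Y ⊆ X := by
  have hpos : ∀ i < κ.ord, 0 < (lam_ i).ord := fun i hi =>
    Cardinal.ord_pos.2 (aleph0_pos.trans_le (hreg i hi).aleph0_le)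
  have hbound : ∀ i ∈ {i | i < κ.ord ∧ cardLT (A i (g β i) \ X) (lam_ i)},
      ∃ γ < (lam_ i).ord, A i (g β i) \ X ⊆ Iic γ := by
    rintro i ⟨hi, hsmall⟩
    have hlt : A i (g β i) \ X ⊆ Iio (lam_ i).ord := fun ζ hζ =>
      ((hU i hi).subset (hAmem i hi _ (hgβ i hi)) hζ.1).2
    exact ⟨_, sSup_lt_ord_of_cardLT (hreg i hi) hlt hsmall,
      fun ζ hζ => le_csSup ⟨_, fun x hx => (hlt hx).le⟩ hζ⟩
  obtain ⟨α, hα, hY⟩ := exists_scale_dominating_witnesses hE hfcof hpos hT hbound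
  exact ⟨α, hα, _, hY, Bset_subset_of_forall_diff_subset_Iic fun i hi => hi.2⟩

end Bset

theorem stmt13_general (lam κ χlam χθ : Cardinal.{0})
    (lam_ θ : Ordinal.{0} → Cardinal.{0})
    (E : Set (Set Ordinal.{0})) (U : Ordinal.{0} → Set (Set Ordinal.{0}))
    (A : Ordinal.{0} → Ordinal.{0} → Set Ordinal.{0})
    (f g : Ordinal.{0} → Ordinal.{0} → Ordinal.{0})
    -- (β) E is a uniform ultrafilter on κ
    (hE : IsUltrafilterOn (Set.Iio κ.ord) E)
    -- (δ) ⟨λ_i : i < κ⟩ strictly increasing regular cardinals tending to λ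
    (hreg : ∀ i < κ.ord, (lam_ i).IsRegular)
    -- (ε) U_i is a uniform ultrafilter on λ_i
    (hU : ∀ i < κ.ord, IsUltrafilterOn (Set.Ico (lamlt lam_ i) ((lam_ i).ord)) (U i))
    (hUuni : ∀ i < κ.ord, ∀ X ∈ U i, cardEQ X (lam_ i))
    -- (ζ) U_i is generated by the ⊆*-decreasing sequence ⟨A i α : α < θ i⟩
    (hAmem : ∀ i < κ.ord, ∀ α < (θ i).ord, A i α ∈ U i)
    (hAdec : ∀ i < κ.ord, ∀ α α', α < α' → α' < (θ i).ord →
      cardLT (A i α' \ A i α) (lam_ i))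
    (hAgen : ∀ i < κ.ord, ∀ B ∈ U i, ∃ α < (θ i).ord, cardLT (A i α \ B) (lam_ i))
    -- (η) χ_λ̄ = tcf(∏ λ_i, <_E) and χ_θ̄ = tcf(∏ θ_i, <_E), witnessed by scales
    (hf : ∀ α < χlam.ord, ∀ i < κ.ord, f α i < (lam_ i).ord)
    (hfcof : ∀ h : Ordinal.{0} → Ordinal.{0}, (∀ i < κ.ord, h i < (lam_ i).ord) →
      ∃ α < χlam.ord, {i | i < κ.ord ∧ h i < f α i} ∈ E)
    (hg : ∀ β < χθ.ord, ∀ i < κ.ord, g β i < (θ i).ord)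
    (hgcof : ∀ h : Ordinal.{0} → Ordinal.{0}, (∀ i < κ.ord, h i < (θ i).ord) →
      ∃ β < χθ.ord, {i | i < κ.ord ∧ h i < g β i} ∈ E) :
    ∀ X, X ⊆ Set.Iio lam.ord →
      ((∃ α < χlam.ord, ∃ β < χθ.ord, ∃ Y ∈ E, Bset lam_ A f g α β Y ⊆ X) ↔
        {i | i < κ.ord ∧ X ∩ Set.Ico (lamlt lam_ i) ((lam_ i).ord) ∈ U i} ∈ E) := by
  intro X _
  constructor
  · rintro ⟨α, hα, β, hβ, Y, hY, hB⟩
    refine hE.mem_of_superset hY (fun i hi => ⟨hE.subset hY hi, ?_⟩) fun i hi => hi.1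
    have hiκ : i < κ.ord := hE.subset hY hi
    exact inter_Ico_mem_of_Bset_subset (hU i hiκ) (hUuni i hiκ) (hreg i hiκ).aleph0_le
      (hAmem i hiκ _ (hg β hβ i hiκ)) (hf α hα i hiκ) hi hB
  · intro hX
    obtain ⟨β, hβ, hT⟩ := exists_scale_almost_subset hE hreg hU hAdec hAgen hg hgcof hX
    obtain ⟨α, hα, Y, hY, hB⟩ :=
      exists_Bset_subset_of_almost_subset hE hreg hU hAmem hfcof (hg β hβ) hT
    exact ⟨α, hα, β, hβ, Y, hY, hB⟩

/-- under the hypotheses of the main theorem (with each `U_i`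
concentrating on the interval `[λ_{<i}, λ_i)` and `A_{i,α} ⊆ [λ_{<i}, λ_i)`),
the ultrafilter generated by `ℬ` equals the `E`-limit ultrafilter: `X ⊆ λ`
contains some `B_{α,β,Y}` iff `{i < κ : X ∩ [λ_{<i}, λ_i) ∈ U_i} ∈ E`. -/
theorem stmt13 (lam κ χlam χθ : Cardinal.{0})
    (lam_ θ : Ordinal.{0} → Cardinal.{0})
    (E : Set (Set Ordinal.{0})) (U : Ordinal.{0} → Set (Set Ordinal.{0}))
    (A : Ordinal.{0} → Ordinal.{0} → Set Ordinal.{0})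
    (f g : Ordinal.{0} → Ordinal.{0} → Ordinal.{0})
    -- (α) κ = cf(λ) < λ
    (hcof : lam.ord.cof = κ) (hκlt : κ < lam)
    -- (β) E is a uniform ultrafilter on κ
    (hE : IsUltrafilterOn (Set.Iio κ.ord) E)
    (hEuni : ∀ Y ∈ E, cardEQ Y κ)
    -- (γ) λ is a strong limit cardinal
    (hsl : lam.IsStrongLimit)
    -- (δ) ⟨λ_i : i < κ⟩ strictly increasing regular cardinals tending to λ
    (hreg : ∀ i < κ.ord, (lam_ i).IsRegular)
    (hmono : ∀ i j, i < j → j < κ.ord → lam_ i < lam_ j)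
    (hlt : ∀ i < κ.ord, lam_ i < lam)
    (hcofinal : ∀ c < lam, ∃ i < κ.ord, c ≤ lam_ i)
    -- (ε) U_i is a uniform ultrafilter on λ_i
    (hU : ∀ i < κ.ord, IsUltrafilterOn (Set.Ico (lamlt lam_ i) ((lam_ i).ord)) (U i))
    (hUuni : ∀ i < κ.ord, ∀ X ∈ U i, cardEQ X (lam_ i))
    -- (ζ) U_i is generated by the ⊆*-decreasing sequence ⟨A i α : α < θ i⟩
    (hAmem : ∀ i < κ.ord, ∀ α < (θ i).ord, A i α ∈ U i)
    (hAint : ∀ i < κ.ord, ∀ α < (θ i).ord, A i α ⊆ Set.Ico (lamlt lam_ i) ((lam_ i).ord))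
    (hAdec : ∀ i < κ.ord, ∀ α α', α < α' → α' < (θ i).ord →
      cardLT (A i α' \ A i α) (lam_ i))
    (hAgen : ∀ i < κ.ord, ∀ B ∈ U i, ∃ α < (θ i).ord, cardLT (A i α \ B) (lam_ i))
    -- (η) χ_λ̄ = tcf(∏ λ_i, <_E) and χ_θ̄ = tcf(∏ θ_i, <_E), witnessed by scales
    (hχlam : χlam.IsRegular) (hχθ : χθ.IsRegular)
    (hf : ∀ α < χlam.ord, ∀ i < κ.ord, f α i < (lam_ i).ord)
    (hfinc : ∀ α α', α < α' → α' < χlam.ord → {i | i < κ.ord ∧ f α i < f α' i} ∈ E)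
    (hfcof : ∀ h : Ordinal.{0} → Ordinal.{0}, (∀ i < κ.ord, h i < (lam_ i).ord) →
      ∃ α < χlam.ord, {i | i < κ.ord ∧ h i < f α i} ∈ E)
    (hg : ∀ β < χθ.ord, ∀ i < κ.ord, g β i < (θ i).ord)
    (hginc : ∀ β β', β < β' → β' < χθ.ord → {i | i < κ.ord ∧ g β i < g β' i} ∈ E)
    (hgcof : ∀ h : Ordinal.{0} → Ordinal.{0}, (∀ i < κ.ord, h i < (θ i).ord) →
      ∃ β < χθ.ord, {i | i < κ.ord ∧ h i < g β i} ∈ E) :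
    ∀ X, X ⊆ Set.Iio lam.ord →
      ((∃ α < χlam.ord, ∃ β < χθ.ord, ∃ Y ∈ E, Bset lam_ A f g α β Y ⊆ X) ↔
        {i | i < κ.ord ∧ X ∩ Set.Ico (lamlt lam_ i) ((lam_ i).ord) ∈ U i} ∈ E) :=
  stmt13_general lam κ χlam χθ lam_ θ E U A f g hE hreg hU hUuni hAmem hAdec hAgen hf hfcof hg hgcof
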